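/- arXiv:1411.0249 — 6 statements merged into one kernel-verified Lean document; each statement's English description precedes it below -/
import Mathlib

section
/- Let n be a positive integer. For a positive integer d, let (n∖d) denote the maximal divisor of n that is coprime to d. Then for any positive integers k and s there exists an integer j₀ with 0 ≤ j₀ ≤ n−1 such that gcd(s + j₀·k, n) = gcd( gcd(s,k) · (n∖k'), n ), where k' = k / gcd(s,k). -/
/-!
STATEMENT 12 (Lemma 12(a)): for any positive integers `k`, `s` there is
`0 ≤ j₀ ≤ n-1` with `gcd(s + j₀ k, n) = gcd(gcd(s,k) ⬝ (n∖k'), n)`,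
where `k' = k / gcd(s,k)` and `(n∖d)` is the maximal divisor of `n` coprime to `d`.
-/

/-- `(n∖d)`: the maximal divisor of `n` that is coprime to `d`, i.e. the product of
the prime powers `p^{m_p}` exactly dividing `n` for primes `p` not dividing `d`. -/
def maxCoprimeDivisor (n d : ℕ) : ℕ :=
  n.factorization.prod fun p e => if p ∣ d then 1 else p ^ e

lemma maxCoprimeDivisor_dvd (n d : ℕ) (hn : n ≠ 0) : maxCoprimeDivisor n d ∣ n := by
  conv_rhs => rw [← Nat.factorization_prod_pow_eq_self hn]
  rw [maxCoprimeDivisor, Finsupp.prod, Finsupp.prod]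
  apply Finset.prod_dvd_prod_of_dvd
  intro p _
  split
  · exact one_dvd _
  · exact dvd_rfl

lemma maxCoprimeDivisor_coprime (n d : ℕ) : Nat.Coprime (maxCoprimeDivisor n d) d := by
  rw [maxCoprimeDivisor, Finsupp.prod]
  apply Nat.Coprime.prod_left
  intro p hp
  by_cases h : p ∣ d
  · simp [h]
  · simpa [h] using Nat.Coprime.pow_left _
      (((Nat.prime_of_mem_primeFactors hp).coprime_iff_not_dvd).mpr h)

lemma le_factorization_maxCoprimeDivisor {n d p : ℕ} (hn : n ≠ 0) (hp : p.Prime)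
    (hpd : ¬ p ∣ d) : n.factorization p ≤ (maxCoprimeDivisor n d).factorization p := by
  have hN : maxCoprimeDivisor n d ≠ 0 := by
    intro h
    exact hn (Nat.eq_zero_of_zero_dvd (h ▸ maxCoprimeDivisor_dvd n d hn))
  rw [← Nat.Prime.pow_dvd_iff_le_factorization hp hN]
  by_cases hmem : p ∈ n.factorization.support
  · have : p ^ n.factorization p ∣ maxCoprimeDivisor n d := by
      rw [maxCoprimeDivisor, Finsupp.prod]
      have := Finset.dvd_prod_of_mem
        (fun q => if q ∣ d then 1 else q ^ n.factorization q) hmem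
      simpa [hpd] using this
    exact this
  · have : n.factorization p = 0 := Finsupp.notMem_support_iff.mp hmem
    simp [this]

theorem exists_shift_gcd_eq_modular
    (n : ℕ) (hn : 0 < n) (k s : ℕ) (hk : 0 < k) (hs : 0 < s) :
    ∃ j₀ : ℕ, j₀ ≤ n - 1 ∧
      Nat.gcd (s + j₀ * k) n
        = Nat.gcd (Nat.gcd s k * maxCoprimeDivisor n (k / Nat.gcd s k)) n := by
  set g := Nat.gcd s k with hg
  have hg0 : 0 < g := Nat.gcd_pos_of_pos_left k hs
  set s' := s / g with hs'
  set k' := k / g with hk'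
  have hgs : g * s' = s := Nat.mul_div_cancel' (Nat.gcd_dvd_left s k)
  have hgk : g * k' = k := Nat.mul_div_cancel' (Nat.gcd_dvd_right s k)
  have hcop : Nat.Coprime s' k' := Nat.coprime_div_gcd_div_gcd hg0
  have hs'0 : 0 < s' := by
    rcases Nat.eq_zero_or_pos s' with h | h
    · rw [h, mul_zero] at hgs; omega
    · exact h
  set N := maxCoprimeDivisor n k' with hN
  have hn0 : n ≠ 0 := hn.ne'
  have hNdvd : N ∣ n := maxCoprimeDivisor_dvd n k' hn0
  have hN0 : N ≠ 0 := by intro h; exact hn0 (Nat.eq_zero_of_zero_dvd (h ▸ hNdvd))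
  have hNcop : Nat.Coprime N k' := maxCoprimeDivisor_coprime n k'
  haveI : NeZero N := ⟨hN0⟩
  -- choose j₀
  set z : ZMod N := (-(s' : ZMod N)) * (k' : ZMod N)⁻¹ with hz
  set j₀ := z.val with hj
  have hku : IsUnit (k' : ZMod N) := by
    rw [ZMod.isUnit_iff_coprime]
    exact (hNcop.symm)
  have hxz : ((s' + j₀ * k' : ℕ) : ZMod N) = 0 := by
    push_cast
    rw [hj, ZMod.natCast_val, ZMod.cast_id, hz]
    have : (k' : ZMod N)⁻¹ * (k' : ZMod N) = 1 := ZMod.inv_mul_of_unit _ hku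
    rw [mul_assoc, this, mul_one]
    ring
  have hNx : N ∣ s' + j₀ * k' := (ZMod.natCast_eq_zero_iff _ _).mp hxz
  set x := s' + j₀ * k' with hx
  have hx0 : x ≠ 0 := by omega
  have hj₀lt : j₀ < N := ZMod.val_lt z
  have hjle : j₀ ≤ n - 1 := by
    have := Nat.le_of_dvd hn hNdvd
    omega
  refine ⟨j₀, hjle, ?_⟩
  have hsx : s + j₀ * k = g * x := by
    rw [hx, ← hgs, ← hgk]; ring
  rw [hsx]
  -- compare factorizations
  have hgx0 : g * x ≠ 0 := by positivity
  have hgN0 : g * N ≠ 0 := by positivity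
  have h1 : Nat.gcd (g * x) n ≠ 0 := Nat.gcd_ne_zero_right hn0
  have h2 : Nat.gcd (g * N) n ≠ 0 := Nat.gcd_ne_zero_right hn0
  apply Nat.eq_of_factorization_eq h1 h2
  intro p
  rw [Nat.factorization_gcd hgx0 hn0, Nat.factorization_gcd hgN0 hn0,
    Nat.factorization_mul hg0.ne' hx0, Nat.factorization_mul hg0.ne' hN0]
  simp only [Finsupp.inf_apply, Finsupp.add_apply]
  by_cases hp : p.Prime
  · by_cases hpk : p ∣ k'
    · have hpx : ¬ p ∣ x := by
        intro hdvd
        have : p ∣ s' := (Nat.dvd_add_right (Dvd.dvd.mul_left hpk j₀)).mp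
          (by rwa [hx, Nat.add_comm] at hdvd)
        have : p ∣ Nat.gcd s' k' := Nat.dvd_gcd this hpk
        rw [hcop] at this
        exact hp.ne_one (Nat.dvd_one.mp this)
      have hvx : x.factorization p = 0 := Nat.factorization_eq_zero_of_not_dvd hpx
      have hpN : ¬ p ∣ N := fun hdvd => by
        have : p ∣ Nat.gcd N k' := Nat.dvd_gcd hdvd hpk
        rw [hNcop] at this
        exact hp.ne_one (Nat.dvd_one.mp this)
      have hvN : N.factorization p = 0 := Nat.factorization_eq_zero_of_not_dvd hpN
      rw [hvx, hvN]
    · have hvN : N.factorization p = n.factorization p :=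
        le_antisymm (Nat.factorization_le_iff_dvd hN0 hn0 |>.mpr hNdvd p)
          (le_factorization_maxCoprimeDivisor hn0 hp hpk)
      have hvx : N.factorization p ≤ x.factorization p :=
        Nat.factorization_le_iff_dvd hN0 hx0 |>.mpr hNx p
      rw [hvN] at hvx ⊢
      omega
  · simp [Nat.factorization_eq_zero_of_not_prime _ hp]
end

section
/- Let n be a positive integer. For any positive integers k and s there exists an integer j with 0 ≤ j ≤ n−1 such that gcd(s + j·k, n) = gcd(gcd(s,n), gcd(k,n)) (equivalently, gcd(s + j·k, n) = gcd(s, k, n)). -/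
/-!
STATEMENT 13 (Lemma 12(b)): for any positive integers `k`, `s` there is
`0 ≤ j ≤ n-1` with `gcd(s + j k, n) = gcd(gcd(s,n), gcd(k,n)) = gcd(s, k, n)`.
-/

/-- Coprime case: if `gcd(a, gcd(b, m)) = 1` then some shift `a + j*b` is coprime to `m`. -/
lemma exists_shift_coprime (a b m : ℕ) (hm : m ≠ 0)
    (h : Nat.gcd a (Nat.gcd b m) = 1) :
    ∃ j : ℕ, Nat.Coprime (a + j * b) m := by
  refine ⟨∏ p ∈ m.primeFactors.filter (fun p => ¬ p ∣ a), p, ?_⟩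
  set j := ∏ p ∈ m.primeFactors.filter (fun p => ¬ p ∣ a), p with hj
  by_contra h'
  obtain ⟨p, hp, hpd⟩ := Nat.exists_prime_and_dvd h'
  have hpab : p ∣ a + j * b := hpd.trans (Nat.gcd_dvd_left _ _)
  have hpm : p ∣ m := hpd.trans (Nat.gcd_dvd_right _ _)
  by_cases hpa : p ∣ a
  · have hpjb : p ∣ j * b := (Nat.dvd_add_right hpa).mp hpab
    rcases (Nat.Prime.dvd_mul hp).mp hpjb with hpj | hpb
    · rw [hj] at hpj
      obtain ⟨q, hq, hpq⟩ := (Nat.Prime.prime hp).exists_mem_finset_dvd hpj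
      have hq' := Finset.mem_filter.mp hq
      have : p = q := (Nat.prime_dvd_prime_iff_eq hp
        (Nat.prime_of_mem_primeFactors hq'.1)).mp hpq
      exact hq'.2 (this ▸ hpa)
    · have : p ∣ Nat.gcd a (Nat.gcd b m) :=
        Nat.dvd_gcd hpa (Nat.dvd_gcd hpb hpm)
      rw [h] at this
      exact absurd (Nat.eq_one_of_dvd_one this) hp.ne_one
  · have hmem : p ∈ m.primeFactors.filter (fun p => ¬ p ∣ a) := by
      refine Finset.mem_filter.mpr ⟨?_, hpa⟩
      exact Nat.mem_primeFactors.mpr ⟨hp, hpm, hm⟩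
    have hpj : p ∣ j := Finset.dvd_prod_of_mem _ hmem
    exact hpa ((Nat.dvd_add_right (hpj.mul_right b)).mp (by rwa [add_comm] at hpab))

theorem exists_shift_gcd_eq_gcd
    (n : ℕ) (hn : 0 < n) (k s : ℕ) (hk : 0 < k) (hs : 0 < s) :
    ∃ j : ℕ, j ≤ n - 1 ∧
      Nat.gcd (s + j * k) n = Nat.gcd (Nat.gcd s n) (Nat.gcd k n) ∧
      Nat.gcd (s + j * k) n = Nat.gcd s (Nat.gcd k n) := by
  set d := Nat.gcd s (Nat.gcd k n) with hd
  have hdn : d ∣ n := (Nat.gcd_dvd_right s _).trans (Nat.gcd_dvd_right k n)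
  have hds : d ∣ s := Nat.gcd_dvd_left _ _
  have hdk : d ∣ k := (Nat.gcd_dvd_right s _).trans (Nat.gcd_dvd_left k n)
  have hd0 : 0 < d := Nat.gcd_pos_of_pos_left _ hs
  set a := s / d with ha
  set b := k / d with hb
  set m := n / d with hm
  have hsa : s = d * a := (Nat.mul_div_cancel' hds).symm
  have hkb : k = d * b := (Nat.mul_div_cancel' hdk).symm
  have hnm : n = d * m := (Nat.mul_div_cancel' hdn).symm
  have hm0 : m ≠ 0 := by
    intro h0; rw [h0, mul_zero] at hnm; omega
  have hcop : Nat.gcd a (Nat.gcd b m) = 1 := by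
    have : d * Nat.gcd a (Nat.gcd b m) = d * 1 := by
      rw [mul_one, ← Nat.gcd_mul_left, ← Nat.gcd_mul_left, ← hsa, ← hkb, ← hnm, ← hd]
    exact Nat.eq_of_mul_eq_mul_left hd0 this
  obtain ⟨j, hjcop⟩ := exists_shift_coprime a b m hm0 hcop
  refine ⟨j % m, ?_, ?_, ?_⟩
  · have h1 : j % m < m := Nat.mod_lt _ (Nat.pos_of_ne_zero hm0)
    have h2 : m ≤ n := hnm ▸ Nat.le_mul_of_pos_left m hd0
    omega
  all_goals {
    have hcongr : Nat.gcd (a + j % m * b) m = Nat.gcd (a + j * b) m := by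
      conv_rhs => rw [show j = j % m + m * (j / m) from (Nat.mod_add_div j m).symm]
      rw [add_mul, ← add_assoc, mul_assoc, mul_comm m (j / m * b)]
      exact (Nat.gcd_add_mul_right_left m (a + j % m * b) (j / m * b)).symm
    have key : Nat.gcd (s + j % m * k) n = d := by
      rw [hsa, hkb, hnm, show d * a + j % m * (d * b) = d * (a + j % m * b) by ring,
        Nat.gcd_mul_left, hcongr, hjcop, mul_one]
    rw [key, hd]
    try rw [Nat.gcd_assoc, Nat.gcd_comm n, Nat.gcd_assoc, Nat.gcd_self]
  }
end

section
/- Let n be a positive integer. For a positive integer d, let (n∖d) denote the maximal divisor of n that is coprime to d. Let k, s, r be positive integers and set k' = k / gcd(s,k). If gcd(gcd(r,n), gcd(k,n)) divides gcd(gcd(s,n), gcd(k,n)), then gcd(r,n) divides gcd( gcd(s,k) · (n∖k'), n ). -/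
lemma maxCoprimeDivisor_pos (n d : ℕ) : 0 < maxCoprimeDivisor n d := by
  unfold maxCoprimeDivisor
  rw [Finsupp.prod]
  refine Finset.prod_pos fun p hp => ?_
  have hpp : p.Prime := Nat.prime_of_mem_primeFactors (by
    rwa [← Nat.support_factorization])
  split
  · exact one_pos
  · exact pow_pos hpp.pos _

lemma pow_dvd_maxCoprimeDivisor {n d p : ℕ} (hpp : p.Prime) (hn : n ≠ 0)
    (hpn : p ∣ n) (hpd : ¬ p ∣ d) :
    p ^ n.factorization p ∣ maxCoprimeDivisor n d := by
  have hmem : p ∈ n.factorization.support := by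
    rw [Nat.support_factorization, Nat.mem_primeFactors]
    exact ⟨hpp, hpn, hn⟩
  unfold maxCoprimeDivisor
  rw [Finsupp.prod]
  have := Finset.dvd_prod_of_mem
    (fun q => if q ∣ d then 1 else q ^ n.factorization q) hmem
  simpa [hpd] using this

theorem gcd_dvd_modular_of_gcd_dvd
    (n : ℕ) (hn : 0 < n) (k s r : ℕ) (hk : 0 < k) (hs : 0 < s) (hr : 0 < r)
    (h : Nat.gcd (Nat.gcd r n) (Nat.gcd k n) ∣ Nat.gcd (Nat.gcd s n) (Nat.gcd k n)) :
    Nat.gcd r n ∣ Nat.gcd (Nat.gcd s k * maxCoprimeDivisor n (k / Nat.gcd s k)) n := by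
  have hgsk : 0 < Nat.gcd s k := Nat.gcd_pos_of_pos_left k hs
  set d := k / Nat.gcd s k with hd
  have hdk : Nat.gcd s k * d = k := Nat.mul_div_cancel' (Nat.gcd_dvd_right s k)
  have hMpos : 0 < maxCoprimeDivisor n d := maxCoprimeDivisor_pos n d
  apply Nat.dvd_gcd _ (Nat.gcd_dvd_right r n)
  have hgpos : 0 < Nat.gcd r n := Nat.gcd_pos_of_pos_right r hn
  have hApos : 0 < Nat.gcd s k * maxCoprimeDivisor n d := Nat.mul_pos hgsk hMpos
  rw [← Nat.factorization_le_iff_dvd hgpos.ne' hApos.ne']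
  have h1pos : 0 < Nat.gcd (Nat.gcd r n) (Nat.gcd k n) :=
    Nat.gcd_pos_of_pos_right _ (Nat.gcd_pos_of_pos_right k hn)
  have h2pos : 0 < Nat.gcd (Nat.gcd s n) (Nat.gcd k n) :=
    Nat.gcd_pos_of_pos_right _ (Nat.gcd_pos_of_pos_right k hn)
  have hple := (Nat.factorization_le_iff_dvd h1pos.ne' h2pos.ne').2 h
  intro p
  by_cases hpp : p.Prime
  swap
  · simp [Nat.factorization_eq_zero_of_not_prime _ hpp]
  have hple' := hple p
  simp only [Nat.factorization_gcd (Nat.gcd_pos_of_pos_right r hn).ne'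
      (Nat.gcd_pos_of_pos_right k hn).ne',
    Nat.factorization_gcd (Nat.gcd_pos_of_pos_right s hn).ne'
      (Nat.gcd_pos_of_pos_right k hn).ne',
    Nat.factorization_gcd hr.ne' hn.ne', Nat.factorization_gcd hk.ne' hn.ne',
    Nat.factorization_gcd hs.ne' hn.ne', Finsupp.inf_apply] at hple'
  rw [Nat.factorization_gcd hr.ne' hn.ne', Finsupp.inf_apply,
    Nat.factorization_mul hgsk.ne' hMpos.ne', Finsupp.add_apply,
    Nat.factorization_gcd hs.ne' hk.ne', Finsupp.inf_apply]
  by_cases hpd : p ∣ d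
  · -- p divides k', so min vs vk < vk and we argue arithmetically
    have hdv : p ^ ((s.gcd k).factorization p) ∣ s.gcd k := Nat.ordProj_dvd _ p
    rw [Nat.factorization_gcd hs.ne' hk.ne', Finsupp.inf_apply] at hdv
    have hdvd : p ^ (min (s.factorization p) (k.factorization p) + 1) ∣ k := by
      have : p ^ (min (s.factorization p) (k.factorization p)) * p ∣ s.gcd k * d :=
        mul_dvd_mul hdv hpd
      rw [hdk] at this
      rwa [pow_succ]
    have hle := (Nat.Prime.pow_dvd_iff_le_factorization hpp hk.ne').1 hdvd
    omega
  · by_cases hpn : p ∣ n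
    · have hvM := (Nat.Prime.pow_dvd_iff_le_factorization hpp hMpos.ne').1
        (pow_dvd_maxCoprimeDivisor hpp hn.ne' hpn hpd)
      omega
    · have hvn : n.factorization p = 0 := Nat.factorization_eq_zero_of_not_dvd hpn
      omega
end

section
/- Let p be a prime number, let V be a vector space over a field of characteristic p, and let ψ be a linear transformation of V of finite order p^k (i.e. ψ^{p^k} = id). If the subspace of fixed points {v ∈ V : ψ(v) = v} has finite dimension m, then V is finite-dimensional and dim V ≤ m·p^k. -/
/-!
STATEMENT 15: If a linear transformation `ψ` of order `p^k` of a vector space `V` over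
a field of characteristic `p` has an `m`-dimensional space of fixed points, then
`dim V ≤ m·p^k` (in particular `V` is finite-dimensional).
-/

universe u v

section Defs

variable {F : Type u} {V : Type v} [Field F] [AddCommGroup V] [Module F V]

/-- The fixed-point subspace of a linear endomorphism. -/
def fixedSubmoduleEnd (ψ : Module.End F V) : Submodule F V where
  carrier := {v | ψ v = v}
  add_mem' := by
    intro a b ha hb
    simp only [Set.mem_setOf_eq, map_add] at *
    rw [ha, hb]
  zero_mem' := by simp
  smul_mem' := by
    intro c a ha
    simp only [Set.mem_setOf_eq, map_smul] at *
    rw [ha]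

end Defs

section Aux

variable {F : Type u} {V : Type v} [Field F] [AddCommGroup V] [Module F V]

lemma ker_pow_findim (f : Module.End F V) [FiniteDimensional F (LinearMap.ker f)] :
    ∀ i : ℕ, FiniteDimensional F (LinearMap.ker (f ^ i)) ∧
      Module.finrank F (LinearMap.ker (f ^ i)) ≤ i * Module.finrank F (LinearMap.ker f) := by
  intro i
  induction i with
  | zero =>
    have hk : LinearMap.ker (f ^ 0) = ⊥ := by
      rw [pow_zero]; exact LinearMap.ker_id
    rw [hk]
    exact ⟨inferInstance, by simp [finrank_bot]⟩
  | succ i ih =>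
    obtain ⟨ihfin, ihle⟩ := ih
    set m := Module.finrank F (LinearMap.ker f)
    have hmap : ∀ x ∈ LinearMap.ker (f ^ (i + 1)), f x ∈ LinearMap.ker (f ^ i) := by
      intro x hx
      rw [LinearMap.mem_ker] at hx ⊢
      have : (f ^ i) (f x) = (f ^ (i + 1)) x := by
        rw [pow_succ]; rfl
      rw [this, hx]
    set g : LinearMap.ker (f ^ (i + 1)) →ₗ[F] LinearMap.ker (f ^ i) :=
      f.restrict hmap with hg
    -- kernel of g embeds into ker f
    have hιmem : ∀ x : LinearMap.ker g, ((x : LinearMap.ker (f ^ (i+1))) : V) ∈ LinearMap.ker f := by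
      intro x
      have hx := x.2
      rw [LinearMap.mem_ker] at hx ⊢
      have : ((g x.1 : LinearMap.ker (f ^ i)) : V) = f ((x.1 : V)) := rfl
      rw [← this, hx]
      rfl
    set φ : LinearMap.ker g →ₗ[F] LinearMap.ker f :=
      LinearMap.codRestrict (LinearMap.ker f)
        (((LinearMap.ker (f ^ (i+1))).subtype).comp (LinearMap.ker g).subtype) hιmem with hφ
    have hφinj : Function.Injective φ := by
      intro a b hab
      have h2 := Subtype.ext_iff.mp hab
      exact Subtype.ext (Subtype.ext h2)
    have hkerfin : FiniteDimensional F (LinearMap.ker g) :=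
      FiniteDimensional.of_injective φ hφinj
    have hkerle : Module.finrank F (LinearMap.ker g) ≤ m :=
      LinearMap.finrank_le_finrank_of_injective hφinj
    have hrangefin : FiniteDimensional F (LinearMap.range g) := inferInstance
    -- domain is finite dimensional by rank-nullity
    have hrank : Module.rank F (LinearMap.range g) + Module.rank F (LinearMap.ker g) =
        Module.rank F (LinearMap.ker (f ^ (i + 1))) := LinearMap.rank_range_add_rank_ker g
    have hfinD : FiniteDimensional F (LinearMap.ker (f ^ (i + 1))) :=
      Module.rank_lt_aleph0_iff.mp (by
        rw [← hrank]
        exact Cardinal.add_lt_aleph0 (Module.rank_lt_aleph0 F _) (Module.rank_lt_aleph0 F _))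
    refine ⟨hfinD, ?_⟩
    have hrn : Module.finrank F (LinearMap.range g) + Module.finrank F (LinearMap.ker g) =
        Module.finrank F (LinearMap.ker (f ^ (i + 1))) :=
      LinearMap.finrank_range_add_finrank_ker g
    have hrange_le : Module.finrank F (LinearMap.range g) ≤ i * m :=
      le_trans (Submodule.finrank_le _) ihle
    rw [← hrn]
    calc Module.finrank F (LinearMap.range g) + Module.finrank F (LinearMap.ker g)
        ≤ i * m + m := add_le_add hrange_le hkerle
      _ = (i + 1) * m := by ring

end Aux

theorem finrank_le_of_p_power_order
    (p : ℕ) (hp : p.Prime) (k : ℕ)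
    (F : Type u) (V : Type v) [Field F] [AddCommGroup V] [Module F V]
    (hchar : CharP F p)
    (ψ : Module.End F V) (hψ : ψ ^ (p ^ k) = 1)
    (m : ℕ)
    (hfin : FiniteDimensional F (fixedSubmoduleEnd ψ))
    (hdim : Module.finrank F (fixedSubmoduleEnd ψ) = m) :
    FiniteDimensional F V ∧ Module.finrank F V ≤ m * p ^ k := by
  rcases subsingleton_or_nontrivial V with hV | hV
  · haveI : FiniteDimensional F V := inferInstance
    refine ⟨inferInstance, ?_⟩
    have h0 : Module.finrank F V = 0 := Module.finrank_zero_of_subsingleton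
    omega
  · haveI : CharP (Module.End F V) p := charP_of_injective_algebraMap' (A := Module.End F V) F p
    haveI hfact := Fact.mk hp
    set N : Module.End F V := ψ - 1 with hN
    have hNker : fixedSubmoduleEnd ψ = LinearMap.ker N := by
      ext v
      have h1 : v ∈ fixedSubmoduleEnd ψ ↔ ψ v = v := Iff.rfl
      rw [h1, LinearMap.mem_ker]
      show ψ v = v ↔ (ψ - 1) v = 0
      rw [LinearMap.sub_apply, Module.End.one_apply, sub_eq_zero]
    have hNpow : N ^ (p ^ k) = 0 := by
      rw [hN, sub_pow_char_pow_of_commute p k (Commute.one_right ψ), hψ, one_pow, sub_self]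
    haveI : FiniteDimensional F (LinearMap.ker N) := by rwa [← hNker]
    have hm : Module.finrank F (LinearMap.ker N) = m := by rwa [← hNker]
    obtain ⟨hfd, hle⟩ := ker_pow_findim N (p ^ k)
    have hkertop : LinearMap.ker (N ^ (p ^ k)) = ⊤ := by
      rw [hNpow]; exact LinearMap.ker_zero
    rw [hkertop] at hfd hle
    haveI : FiniteDimensional F V :=
      Module.Finite.equiv (Submodule.topEquiv (R := F) (M := V))
    refine ⟨this, ?_⟩
    rw [finrank_top, hm] at hle
    calc Module.finrank F V ≤ p ^ k * m := hle
      _ = m * p ^ k := mul_comm _ _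
end

section
/- Let L = ⊕_{i=0}^{n-1} L_i be a (Z/nZ)-graded Lie type algebra over a field F. If L is generated as an algebra by a homogeneous subspace M, then L is spanned as an F-vector space by the left-normalized (simple) products [m_1, m_2, …, m_s] (s ≥ 1) in homogeneous elements m_1, …, m_s of M. -/
/-!
STATEMENT 16: If a `(ℤ/nℤ)`-graded Lie type algebra `L` is generated as an algebra by
a homogeneous subspace `M`, then `L` is spanned as a vector space by the
left-normalized products `[m₁, m₂, …, m_s]` (`s ≥ 1`) in homogeneous elements of `M`.
-/

universe u v

section Defs

variable {F : Type u} {L : Type v} [Field F] [AddCommGroup L] [Module F L]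

/-- A `(ℤ/nℤ)`-grading of an algebra. -/
def IsAlgebraGrading (n : ℕ) (mul : L →ₗ[F] L →ₗ[F] L)
    (Lc : ZMod n → Submodule F L) : Prop :=
  DirectSum.IsInternal Lc ∧
    ∀ i j : ZMod n, Submodule.map₂ mul (Lc i) (Lc j) ≤ Lc (i + j)

/-- The graded Lie type condition. -/
def IsGradedLieType (n : ℕ) (mul : L →ₗ[F] L →ₗ[F] L)
    (Lc : ZMod n → Submodule F L) : Prop :=
  ∀ (i j k : ZMod n) (a b c : L), a ∈ Lc i → b ∈ Lc j → c ∈ Lc k →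
    ∃ α β : F, α ≠ 0 ∧
      mul (mul a b) c = α • mul a (mul b c) + β • mul (mul a c) b

/-- The subalgebra generated by a subspace `S`. -/
def subalgebraClosure (mul : L →ₗ[F] L →ₗ[F] L) (S : Submodule F L) :
    Submodule F L :=
  sInf {A : Submodule F L | S ≤ A ∧ Submodule.map₂ mul A A ≤ A}

/-- Left-normalized product of an element with a list:
`leftNormProdFrom mul a [b₁, …, b_t] = [a, b₁, …, b_t]`. -/
def leftNormProdFrom (mul : L →ₗ[F] L →ₗ[F] L) (a : L) (l : List L) : L :=
  l.foldl (fun x y => mul x y) a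

/-- Left-normalized product `[a₁, a₂, …, a_s]` of a nonempty list of elements
(the empty list gives `0`). -/
def leftNormProdElems (mul : L →ₗ[F] L →ₗ[F] L) : List L → L
  | [] => 0
  | a :: rest => leftNormProdFrom mul a rest

end Defs

theorem span_of_simple_products_of_generating_homogeneous_subspace
    (n : ℕ) (hn : 0 < n)
    (F : Type u) (L : Type v) [Field F] [AddCommGroup L] [Module F L]
    (mul : L →ₗ[F] L →ₗ[F] L) (Lc : ZMod n → Submodule F L)
    (hgr : IsAlgebraGrading n mul Lc) (hlt : IsGradedLieType n mul Lc)
    (M : Submodule F L)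
    (hhom : M = ⨆ i : ZMod n, M ⊓ Lc i)
    (hgen : subalgebraClosure mul M = ⊤) :
    Submodule.span F
        {x : L | ∃ l : List L, l ≠ [] ∧
          (∀ a ∈ l, a ∈ M ∧ ∃ i : ZMod n, a ∈ Lc i) ∧
          x = leftNormProdElems mul l}
      = ⊤ := by
  set S : Set L := {x : L | ∃ l : List L, l ≠ [] ∧
      (∀ a ∈ l, a ∈ M ∧ ∃ i : ZMod n, a ∈ Lc i) ∧
      x = leftNormProdElems mul l} with hSdef
  set W := Submodule.span F S with hWdef
  -- appending a single element to a nonempty list multiplies on the right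
  have happ : ∀ (a : L) (rest : List L) (m : L),
      leftNormProdElems mul (a :: (rest ++ [m]))
        = mul (leftNormProdElems mul (a :: rest)) m := by
    intro a rest m
    simp [leftNormProdElems, leftNormProdFrom, List.foldl_append]
  -- homogeneity of products of homogeneous elements
  have hdeg : ∀ l : List L, l ≠ [] → (∀ a ∈ l, ∃ i : ZMod n, a ∈ Lc i) →
      ∃ i : ZMod n, leftNormProdElems mul l ∈ Lc i := by
    intro l
    induction l using List.reverseRecOn with
    | nil => simp
    | append_singleton l m ih =>
      intro _ h
      match l with
      | [] =>
        obtain ⟨i, hi⟩ := h m (by simp)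
        exact ⟨i, by simpa [leftNormProdElems, leftNormProdFrom] using hi⟩
      | a :: rest =>
        obtain ⟨i, hi⟩ := ih (by simp) (fun x hx => h x (List.mem_append_left _ hx))
        obtain ⟨j, hj⟩ := h m (by simp)
        refine ⟨i + j, ?_⟩
        rw [List.cons_append, happ]
        exact hgr.2 i j (Submodule.apply_mem_map₂ mul hi hj)
  -- W is closed under right multiplication by homogeneous elements of M
  have hrmul : ∀ m : L, m ∈ M → (∃ i : ZMod n, m ∈ Lc i) →
      ∀ z ∈ W, mul z m ∈ W := by
    intro m hmM hmLc z hz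
    induction hz using Submodule.span_induction with
    | mem x hx =>
      obtain ⟨l, hlne, hlmem, rfl⟩ := hx
      match l with
      | a :: rest =>
        apply Submodule.subset_span
        refine ⟨a :: (rest ++ [m]), by simp, ?_, (happ a rest m).symm⟩
        intro x hx
        rcases (by simpa using hx : x = a ∨ x ∈ rest ∨ x = m) with rfl | hx | rfl
        · exact hlmem x (by simp)
        · exact hlmem x (by simp [hx])
        · exact ⟨hmM, hmLc⟩
    | zero => simp
    | add x y hx hy ihx ihy =>
      rw [map_add, LinearMap.add_apply]; exact W.add_mem ihx ihy
    | smul c x hx ihx =>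
      rw [map_smul, LinearMap.smul_apply]; exact W.smul_mem c ihx
  -- the key lemma: product of two generators is in W
  have hmulSS : ∀ (l₂ : List L), l₂ ≠ [] →
      (∀ a ∈ l₂, a ∈ M ∧ ∃ i : ZMod n, a ∈ Lc i) →
      ∀ (l₁ : List L), l₁ ≠ [] →
      (∀ a ∈ l₁, a ∈ M ∧ ∃ i : ZMod n, a ∈ Lc i) →
      mul (leftNormProdElems mul l₁) (leftNormProdElems mul l₂) ∈ W := by
    intro l₂
    induction l₂ using List.reverseRecOn with
    | nil => simp
    | append_singleton l m ih =>
      intro _ h₂ l₁ h₁ne h₁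
      obtain ⟨hmM, hmLc⟩ := h₂ m (by simp)
      match l with
      | [] =>
        -- second factor is just m : appending to l₁
        have : leftNormProdElems mul ([] ++ [m]) = m := by
          simp [leftNormProdElems, leftNormProdFrom]
        rw [this]
        exact hrmul m hmM hmLc _ (Submodule.subset_span ⟨l₁, h₁ne, h₁, rfl⟩)
      | a :: rest =>
        have h₂' : ∀ x ∈ a :: rest, x ∈ M ∧ ∃ i : ZMod n, x ∈ Lc i :=
          fun x hx => h₂ x (List.mem_append_left _ hx)
        obtain ⟨i, hi⟩ := hdeg l₁ h₁ne (fun x hx => (h₁ x hx).2)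
        obtain ⟨j, hj⟩ := hdeg (a :: rest) (by simp) (fun x hx => (h₂' x hx).2)
        obtain ⟨k, hk⟩ := hmLc
        obtain ⟨b, r, rfl⟩ := List.exists_cons_of_ne_nil h₁ne
        have h₁ne : (b :: r) ≠ [] := by simp
        obtain ⟨α, β, hα, heq⟩ := hlt i j k (leftNormProdElems mul (b :: r))
          (leftNormProdElems mul (a :: rest)) m hi hj hk
        set x := leftNormProdElems mul (b :: r)
        set y' := leftNormProdElems mul (a :: rest)
        have hz : mul x (mul y' m) =
            α⁻¹ • (mul (mul x y') m - β • mul (mul x m) y') := by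
          rw [heq, add_sub_cancel_right, smul_smul, inv_mul_cancel₀ hα, one_smul]
        rw [List.cons_append, happ, hz]
        have h1 : mul x y' ∈ W := ih (by simp) h₂' (b :: r) h₁ne h₁
        have h2 : mul (mul x y') m ∈ W := hrmul m hmM ⟨k, hk⟩ _ h1
        have h3 : mul (mul x m) y' ∈ W := by
          have hxm : mul x m = leftNormProdElems mul (b :: r ++ [m]) := by
            rw [List.cons_append, happ]
          rw [hxm]
          refine ih (by simp) h₂' (b :: r ++ [m]) (by simp) ?_
          intro z hz
          rcases List.mem_append.mp hz with hz | hz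
          · exact h₁ z hz
          · simp only [List.mem_singleton] at hz; subst hz; exact ⟨hmM, ⟨k, hk⟩⟩
        exact W.smul_mem _ (W.sub_mem h2 (W.smul_mem _ h3))
  -- W is closed under multiplication
  have hclosed : Submodule.map₂ mul W W ≤ W := by
    rw [Submodule.map₂_le]
    intro x hx y hy
    induction hy using Submodule.span_induction with
    | mem y hyS =>
      obtain ⟨l₂, h₂ne, h₂, rfl⟩ := hyS
      induction hx using Submodule.span_induction with
      | mem x hxS =>
        obtain ⟨l₁, h₁ne, h₁, rfl⟩ := hxS
        exact hmulSS l₂ h₂ne h₂ l₁ h₁ne h₁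
      | zero => simp
      | add a b ha hb iha ihb =>
        rw [map_add, LinearMap.add_apply]; exact W.add_mem iha ihb
      | smul c a ha iha =>
        rw [map_smul, LinearMap.smul_apply]; exact W.smul_mem c iha
    | zero => rw [map_zero]; exact W.zero_mem
    | add a b ha hb iha ihb =>
      rw [map_add]; exact W.add_mem iha ihb
    | smul c a ha iha =>
      rw [map_smul]; exact W.smul_mem c iha
  -- M ≤ W
  have hMW : M ≤ W := by
    rw [hhom]
    refine iSup_le fun i => ?_
    rintro m ⟨hmM, hmLc⟩
    refine Submodule.subset_span ⟨[m], by simp, ?_, rfl⟩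
    intro a ha
    simp only [List.mem_singleton] at ha; subst ha
    exact ⟨hmM, ⟨i, hmLc⟩⟩
  have : subalgebraClosure mul M ≤ W := sInf_le ⟨hMW, hclosed⟩
  rw [hgen] at this
  exact le_antisymm le_top this
end

section
/- Let p be a prime, let V be a vector space over a field of characteristic p, and let φ be a linear automorphism of V of finite order n, where n = p^k·q with p not dividing q. If the fixed-point subspace of φ has finite dimension m, then the fixed-point subspace of φ^{p^k} has dimension at most m·p^k. -/
universe u v

section Defs

variable {F : Type u} {V : Type v} [Field F] [AddCommGroup V] [Module F V]

/-- The fixed-point subspace of a linear automorphism. -/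
def fixedSubmodule (φ : V ≃ₗ[F] V) : Submodule F V where
  carrier := {a | φ a = a}
  add_mem' := by
    intro a b ha hb
    simp only [Set.mem_setOf_eq, map_add] at *
    rw [ha, hb]
  zero_mem' := by simp
  smul_mem' := by
    intro c a ha
    simp only [Set.mem_setOf_eq, map_smul] at *
    rw [ha]

end Defs

open LinearMap Module

section Aux

variable {F : Type u} {V : Type v} [Field F] [AddCommGroup V] [Module F V]

lemma aux_nilker (f : V →ₗ[F] V) (m : ℕ)
    (hk : FiniteDimensional F (ker f)) (hm : finrank F (ker f) ≤ m) :
    ∀ e : ℕ, FiniteDimensional F (ker (f ^ e)) ∧ finrank F (ker (f ^ e)) ≤ m * e := by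
  intro e
  induction e with
  | zero =>
      rw [pow_zero, Module.End.one_eq_id, LinearMap.ker_id]
      exact ⟨inferInstance, by simp⟩
  | succ e ih =>
      obtain ⟨ihfin, ihle⟩ := ih
      set K := ker (f ^ (e + 1)) with hK
      have hmap : ∀ x ∈ K, f x ∈ ker (f ^ e) := by
        intro x hx
        simp only [mem_ker] at hx ⊢
        have : (f ^ e) (f x) = (f ^ (e + 1)) x := by rw [pow_succ]; rfl
        rw [this, hx]
      have hfg : K.FG := by
        apply Submodule.fg_of_fg_map_of_fg_inf_ker f
        · have hle : K.map f ≤ ker (f ^ e) := by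
            rintro _ ⟨x, hx, rfl⟩
            exact hmap x hx
          exact (Submodule.fg_iff_finiteDimensional _).mpr
            (Submodule.finiteDimensional_of_le hle)
        · exact (Submodule.fg_iff_finiteDimensional _).mpr
            (Submodule.finiteDimensional_of_le (inf_le_right : K ⊓ ker f ≤ ker f))
      have hKfin : FiniteDimensional F K := (Submodule.fg_iff_finiteDimensional _).mp hfg
      refine ⟨hKfin, ?_⟩
      let g : K →ₗ[F] ker (f ^ e) := f.restrict hmap
      have h1 : finrank F (range g) + finrank F (ker g) = finrank F K :=
        g.finrank_range_add_finrank_ker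
      have h2 : finrank F (range g) ≤ m * e := le_trans (Submodule.finrank_le _) ihle
      have h3 : finrank F (ker g) ≤ m := by
        have hmem : ∀ x : ker g, ((x : K) : V) ∈ ker f := by
          rintro ⟨⟨x, hxK⟩, hx⟩
          have : g ⟨x, hxK⟩ = 0 := hx
          have : f x = 0 := congrArg (Subtype.val) this
          exact this
        let j : ker g →ₗ[F] ker f :=
          LinearMap.codRestrict (ker f) (K.subtype.comp (ker g).subtype) hmem
        have hj : Function.Injective j := by
          intro a b hab
          apply Subtype.ext
          apply Subtype.ext
          exact (congrArg (Subtype.val : ker f → V) hab : _)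
        exact le_trans (LinearMap.finrank_le_finrank_of_injective hj) hm
      calc finrank F K = finrank F (range g) + finrank F (ker g) := h1.symm
        _ ≤ m * e + m := Nat.add_le_add h2 h3
        _ = m * (e + 1) := by ring

lemma fixed_eq_ker (ψ : V ≃ₗ[F] V) :
    fixedSubmodule ψ = ker ((ψ : V →ₗ[F] V) - LinearMap.id) := by
  ext x
  simp only [_root_.fixedSubmodule, Submodule.mem_mk, AddSubmonoid.mem_mk, AddSubsemigroup.mem_mk,
    Set.mem_setOf_eq, mem_ker, LinearMap.sub_apply, LinearMap.id_apply, sub_eq_zero,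
    LinearEquiv.coe_coe]

end Aux

theorem finrank_fixed_pow_p_power_le
    (p : ℕ) (hp : p.Prime) (k q n : ℕ) (hq : 0 < q) (hpq : Nat.gcd p q = 1)
    (hn : n = p ^ k * q)
    (F : Type u) (V : Type v) [Field F] [AddCommGroup V] [Module F V]
    (hchar : CharP F p)
    (φ : V ≃ₗ[F] V) (hφ : φ ^ n = 1)
    (m : ℕ)
    (hfin : FiniteDimensional F (fixedSubmodule φ))
    (hdim : Module.finrank F (fixedSubmodule φ) = m) :
    FiniteDimensional F (fixedSubmodule (φ ^ (p ^ k))) ∧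
      Module.finrank F (fixedSubmodule (φ ^ (p ^ k))) ≤ m * p ^ k := by
  rcases subsingleton_or_nontrivial V with hV | hV
  · have hbot : fixedSubmodule (φ ^ (p ^ k)) = ⊥ := Subsingleton.elim _ _
    rw [hbot]
    exact ⟨inferInstance, by simp⟩
  · haveI : Fact p.Prime := ⟨hp⟩
    haveI : CharP (Module.End F V) p :=
      charP_of_injective_algebraMap (algebraMap F (Module.End F V)).injective p
    set A : Module.End F V := (φ : V →ₗ[F] V) with hA
    have hApow : ∀ e : ℕ, ((φ ^ e : V ≃ₗ[F] V) : V →ₗ[F] V) = A ^ e := by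
      intro e
      ext x
      rw [LinearEquiv.coe_coe, LinearEquiv.pow_apply, Module.End.pow_apply, hA]
      simp
    have key : (A - 1) ^ (p ^ k) = A ^ (p ^ k) - 1 := by
      rw [sub_pow_char_pow_of_commute p k (Commute.one_right A), one_pow]
    have hker : fixedSubmodule (φ ^ (p ^ k)) = ker ((A - 1) ^ (p ^ k)) := by
      rw [fixed_eq_ker, key, hApow]
      rfl
    have hker1 : fixedSubmodule φ = ker (A - 1) := by
      rw [fixed_eq_ker]
      rfl
    have hfin1 : FiniteDimensional F (ker (A - 1)) := by rw [← hker1]; exact hfin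
    have hdim1 : finrank F (ker (A - 1)) ≤ m := by rw [← hker1, hdim]
    obtain ⟨h1, h2⟩ := aux_nilker (A - 1) m hfin1 hdim1 (p ^ k)
    rw [hker]
    exact ⟨h1, h2⟩
end
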